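/- For X strictly lower-triangular with φ_Δ(X) = X one has φ_Δ(exp(X)) = exp(X), i.e., exp maps NT^{Δ+} into ST^Δ; and for φ_Δ(X) = -X one has φ_Δ(exp(X)) = exp(X)⁻¹, i.e., exp maps NT^{Δ-} into OT^Δ. Conversely, every element of ST^Δ (resp. OT^Δ) is exp(X) for a unique X ∈ NT^{Δ+} (resp. NT^{Δ-}). -/

import Mathlib

open Matrix

def StrictLT {n : ℕ} {K : Type*} [Field K] (X : Matrix (Fin n) (Fin n) K) : Prop :=
  ∀ i j : Fin n, i ≤ j → X i j = 0

def UnipLT {n : ℕ} {K : Type*} [Field K] (M : Matrix (Fin n) (Fin n) K) : Prop :=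
  (∀ i, M i i = 1) ∧ ∀ i j : Fin n, i < j → M i j = 0

noncomputable def phiD {n : ℕ} {K : Type*} [Field K]
    (Δ M : Matrix (Fin n) (Fin n) K) : Matrix (Fin n) (Fin n) K :=
  Δ * Mᵀ * Δ⁻¹

noncomputable def matexp {n : ℕ} {K : Type*} [Field K]
    (X : Matrix (Fin n) (Fin n) K) : Matrix (Fin n) (Fin n) K :=
  ∑ k ∈ Finset.range n, ((Nat.factorial k : K))⁻¹ • X ^ k

/-!
Filter matrices by depth below the diagonal. For strictly lower-triangular `X`, `Y`, the terms of
degree `≥ 2` of `exp X - exp Y` lie one level deeper than `X - Y`. Hence `exp` is injective on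
strictly lower-triangular matrices, and the iteration `L ↦ L + (M - exp L)` gains one level per
step, so after `n` steps it is a logarithm of the unipotent `M`.

As an anti-automorphism, `φ_Δ` commutes with `exp`, which gives the forward inclusions (with
`exp (-X) = (exp X)⁻¹`). It also commutes with the iteration, which uses only ring operations
and `exp`; this transfers the symmetry of `M` to its logarithm although `φ_Δ` need not preserve
triangularity: `φ_Δ (log M) = log (φ_Δ M)`, which is `log M` or `log M⁻¹ = -log M`.
-/

open Finset

section Filtration

variable {n : ℕ} {R : Type*} [Ring R]

def lowerFiltration (m : ℕ) : Submodule R (Matrix (Fin n) (Fin n) R) where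
  carrier := {A | ∀ i j : Fin n, (i : ℕ) < j + m → A i j = 0}
  add_mem' hA hB i j h := by simp [hA i j h, hB i j h]
  zero_mem' _ _ _ := rfl
  smul_mem' c A hA i j h := by simp [hA i j h]

theorem lowerFiltration_antitone : Antitone (lowerFiltration (n := n) (R := R)) :=
  fun _ _ hab _ hA i j h => hA i j (by omega)

theorem mul_mem_lowerFiltration {a b : ℕ} {A B : Matrix (Fin n) (Fin n) R}
    (hA : A ∈ lowerFiltration a) (hB : B ∈ lowerFiltration b) :
    A * B ∈ lowerFiltration (a + b) := by
  intro i j h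
  rw [mul_apply]
  refine sum_eq_zero fun l _ => ?_
  by_cases hl : (i : ℕ) < l + a
  · rw [hA i l hl, zero_mul]
  · rw [hB l j (by omega), mul_zero]

theorem pow_mem_lowerFiltration {X : Matrix (Fin n) (Fin n) R} (hX : X ∈ lowerFiltration 1) :
    ∀ k, X ^ k ∈ lowerFiltration k
  | 0 => fun i j h => by rw [pow_zero, one_apply_ne (by omega)]
  | k + 1 => by rw [pow_succ]; exact mul_mem_lowerFiltration (pow_mem_lowerFiltration hX k) hX

theorem eq_zero_of_mem_lowerFiltration {A : Matrix (Fin n) (Fin n) R}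
    (h : A ∈ lowerFiltration n) : A = 0 := by
  ext i j
  exact h i j (by omega)

theorem pow_eq_zero_of_mem_lowerFiltration {X : Matrix (Fin n) (Fin n) R}
    (hX : X ∈ lowerFiltration 1) {k : ℕ} (hk : n ≤ k) : X ^ k = 0 :=
  eq_zero_of_mem_lowerFiltration (lowerFiltration_antitone hk (pow_mem_lowerFiltration hX k))

theorem pow_succ_sub_pow_succ_mem_lowerFiltration {X Y : Matrix (Fin n) (Fin n) R} {m : ℕ}
    (hX : X ∈ lowerFiltration 1) (hY : Y ∈ lowerFiltration 1) (hXY : X - Y ∈ lowerFiltration m) :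
    ∀ j, X ^ (j + 1) - Y ^ (j + 1) ∈ lowerFiltration (m + j)
  | 0 => by simpa using hXY
  | j + 1 => by
    have hsplit : X ^ (j + 2) - Y ^ (j + 2)
        = X * (X ^ (j + 1) - Y ^ (j + 1)) + (X - Y) * Y ^ (j + 1) := by
      rw [mul_sub, sub_mul, sub_add_sub_cancel, ← pow_succ', ← pow_succ']
    rw [hsplit]
    refine add_mem ?_ (lowerFiltration_antitone (by omega) (mul_mem_lowerFiltration hXY
      (pow_mem_lowerFiltration hY (j + 1))))
    exact lowerFiltration_antitone (by omega)
      (mul_mem_lowerFiltration hX (pow_succ_sub_pow_succ_mem_lowerFiltration hX hY hXY j))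

end Filtration

section Exp

variable {n : ℕ} {K : Type*} [Field K]

theorem strictLT_iff_mem_lowerFiltration {X : Matrix (Fin n) (Fin n) K} :
    StrictLT X ↔ X ∈ lowerFiltration 1 :=
  ⟨fun h i j hij => h i j (Fin.le_def.mpr (by omega)),
    fun h i j hij => h i j (by have := Fin.le_def.mp hij; omega)⟩

theorem UnipLT.sub_one_mem_lowerFiltration {M : Matrix (Fin n) (Fin n) K} (hM : UnipLT M) :
    M - 1 ∈ lowerFiltration 1 := by
  intro i j h
  rcases eq_or_ne i j with rfl | hij
  · simp [hM.1 i]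
  · simp [hM.2 i j (Fin.lt_def.mpr (by omega)), one_apply_ne hij]

theorem matexp_eq_sum_range {X : Matrix (Fin n) (Fin n) K} (hX : X ∈ lowerFiltration 1)
    {N : ℕ} (hN : n ≤ N) : matexp X = ∑ k ∈ range N, (Nat.factorial k : K)⁻¹ • X ^ k := by
  refine sum_subset (range_subset_range.2 hN) fun k _ hk => ?_
  rw [pow_eq_zero_of_mem_lowerFiltration hX (by simpa using hk), smul_zero]

theorem matexp_zero : matexp (0 : Matrix (Fin n) (Fin n) K) = 1 := by
  rcases n with _ | n
  · exact Subsingleton.elim _ _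
  · simp [matexp, sum_range_succ']

theorem matexp_sub_matexp_sub_mem_lowerFiltration {X Y : Matrix (Fin n) (Fin n) K} {m : ℕ}
    (hX : X ∈ lowerFiltration 1) (hY : Y ∈ lowerFiltration 1) (hXY : X - Y ∈ lowerFiltration m) :
    matexp X - matexp Y - (X - Y) ∈ lowerFiltration (m + 1) := by
  have hn : n ≤ n + 2 := by omega
  rw [matexp_eq_sum_range hX hn, matexp_eq_sum_range hY hn, ← sum_sub_distrib]
  simp only [← smul_sub]
  rw [sum_range_succ', sum_range_succ']
  simp only [pow_zero, sub_self, smul_zero, add_zero, zero_add, Nat.factorial_one,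
    Nat.cast_one, inv_one, pow_one, one_smul, add_sub_cancel_right]
  refine sum_mem fun k _ => Submodule.smul_mem _ _ ?_
  exact lowerFiltration_antitone (by omega)
    (pow_succ_sub_pow_succ_mem_lowerFiltration hX hY hXY (k + 1))

theorem matexp_injOn :
    Set.InjOn (matexp (n := n) (K := K)) (lowerFiltration (n := n) (R := K) 1) := by
  intro X hX Y hY h
  have hdeep : ∀ m, X - Y ∈ lowerFiltration (m + 1) := by
    intro m
    induction m with
    | zero => exact sub_mem hX hY
    | succ m ih =>
      simpa [h] using neg_mem (matexp_sub_matexp_sub_mem_lowerFiltration hX hY ih)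
  exact sub_eq_zero.mp
    (eq_zero_of_mem_lowerFiltration (lowerFiltration_antitone (by omega) (hdeep n)))

theorem matexp_sub_one_mem_lowerFiltration {X : Matrix (Fin n) (Fin n) K}
    (hX : X ∈ lowerFiltration 1) : matexp X - 1 ∈ lowerFiltration 1 := by
  have h := matexp_sub_matexp_sub_mem_lowerFiltration hX (zero_mem _) (by simpa using hX)
  rw [matexp_zero, sub_zero] at h
  simpa using add_mem (lowerFiltration_antitone (by omega) h) hX

noncomputable def logApprox (M : Matrix (Fin n) (Fin n) K) : ℕ → Matrix (Fin n) (Fin n) K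
  | 0 => 0
  | k + 1 => logApprox M k + (M - matexp (logApprox M k))

theorem logApprox_mem_and_sub_matexp_mem {M : Matrix (Fin n) (Fin n) K}
    (hM : M - 1 ∈ lowerFiltration 1) :
    ∀ k, logApprox M k ∈ lowerFiltration 1 ∧
      M - matexp (logApprox M k) ∈ lowerFiltration (k + 1)
  | 0 => ⟨zero_mem _, by rwa [logApprox, matexp_zero]⟩
  | k + 1 => by
    obtain ⟨hL, herr⟩ := logApprox_mem_and_sub_matexp_mem hM k
    have hL' : logApprox M (k + 1) ∈ lowerFiltration 1 :=
      add_mem hL (lowerFiltration_antitone (by omega) herr)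
    have hstep : logApprox M (k + 1) - logApprox M k = M - matexp (logApprox M k) := by
      rw [logApprox]; abel
    refine ⟨hL', ?_⟩
    have h := matexp_sub_matexp_sub_mem_lowerFiltration hL' hL (hstep ▸ herr)
    rw [hstep] at h
    convert neg_mem h using 1
    abel

theorem logApprox_mem_lowerFiltration {M : Matrix (Fin n) (Fin n) K}
    (hM : M - 1 ∈ lowerFiltration 1) : logApprox M n ∈ lowerFiltration 1 :=
  (logApprox_mem_and_sub_matexp_mem hM n).1

theorem matexp_logApprox {M : Matrix (Fin n) (Fin n) K} (hM : M - 1 ∈ lowerFiltration 1) :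
    matexp (logApprox M n) = M :=
  (sub_eq_zero.mp (eq_zero_of_mem_lowerFiltration
    (lowerFiltration_antitone (by omega) (logApprox_mem_and_sub_matexp_mem hM n).2))).symm

theorem existsUnique_strictLT_matexp_eq {M : Matrix (Fin n) (Fin n) K} (hM : UnipLT M)
    {P : Matrix (Fin n) (Fin n) K → Prop} (hP : P (logApprox M n)) :
    ∃! X, StrictLT X ∧ P X ∧ matexp X = M := by
  have hM1 := hM.sub_one_mem_lowerFiltration
  refine ⟨logApprox M n, ⟨strictLT_iff_mem_lowerFiltration.mpr
    (logApprox_mem_lowerFiltration hM1), hP, matexp_logApprox hM1⟩, ?_⟩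
  rintro Y ⟨hY, -, hYM⟩
  exact matexp_injOn (strictLT_iff_mem_lowerFiltration.mp hY) (logApprox_mem_lowerFiltration hM1)
    (hYM.trans (matexp_logApprox hM1).symm)

section CharZero

variable [CharZero K]

theorem matexp_eq_exp {X : Matrix (Fin n) (Fin n) K} (hX : X ∈ lowerFiltration 1) :
    matexp X = IsNilpotent.exp X := by
  rw [IsNilpotent.exp_eq_sum (pow_eq_zero_of_mem_lowerFiltration hX le_rfl), matexp]
  refine sum_congr rfl fun k _ => ?_
  rw [← Rat.cast_smul_eq_qsmul K]
  push_cast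
  rfl

theorem matexp_neg {X : Matrix (Fin n) (Fin n) K} (hX : X ∈ lowerFiltration 1) :
    matexp (-X) = (matexp X)⁻¹ := by
  have hexp : matexp X * matexp (-X) = 1 := by
    rw [matexp_eq_exp hX, matexp_eq_exp (neg_mem hX)]
    exact IsNilpotent.exp_mul_exp_neg_self ⟨n, pow_eq_zero_of_mem_lowerFiltration hX le_rfl⟩
  exact (inv_eq_right_inv hexp).symm

theorem logApprox_inv {M : Matrix (Fin n) (Fin n) K} (hM : M - 1 ∈ lowerFiltration 1) :
    logApprox M⁻¹ n = -logApprox M n := by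
  have hL := logApprox_mem_lowerFiltration hM
  have hMinv : M⁻¹ = matexp (-logApprox M n) := by
    rw [matexp_neg hL, matexp_logApprox hM]
  have hMinv1 : M⁻¹ - 1 ∈ lowerFiltration 1 :=
    hMinv ▸ matexp_sub_one_mem_lowerFiltration (neg_mem hL)
  exact matexp_injOn (logApprox_mem_lowerFiltration hMinv1) (neg_mem hL)
    (by rw [matexp_logApprox hMinv1, hMinv])

end CharZero

end Exp

section Phi

variable {n : ℕ} {K : Type*} [Field K] {Δ : Matrix (Fin n) (Fin n) K}

theorem phiD_add (A B : Matrix (Fin n) (Fin n) K) : phiD Δ (A + B) = phiD Δ A + phiD Δ B := by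
  simp [phiD, Matrix.mul_add, Matrix.add_mul]

theorem phiD_sub (A B : Matrix (Fin n) (Fin n) K) : phiD Δ (A - B) = phiD Δ A - phiD Δ B := by
  simp [phiD, Matrix.mul_sub, Matrix.sub_mul]

theorem phiD_smul (c : K) (A : Matrix (Fin n) (Fin n) K) : phiD Δ (c • A) = c • phiD Δ A := by
  simp [phiD]

theorem phiD_sum {ι : Type*} (s : Finset ι) (f : ι → Matrix (Fin n) (Fin n) K) :
    phiD Δ (∑ i ∈ s, f i) = ∑ i ∈ s, phiD Δ (f i) := by
  simp [phiD, transpose_sum, mul_sum, sum_mul]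

theorem phiD_one (hdet : IsUnit Δ.det) : phiD Δ 1 = 1 := by
  simp [phiD, mul_nonsing_inv Δ hdet]

theorem phiD_mul (hdet : IsUnit Δ.det) (A B : Matrix (Fin n) (Fin n) K) :
    phiD Δ (A * B) = phiD Δ B * phiD Δ A := by
  simp only [phiD, transpose_mul, Matrix.mul_assoc, nonsing_inv_mul_cancel_left _ _ hdet]

theorem phiD_pow (hdet : IsUnit Δ.det) (A : Matrix (Fin n) (Fin n) K) (k : ℕ) :
    phiD Δ (A ^ k) = phiD Δ A ^ k := by
  induction k with
  | zero => exact phiD_one hdet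
  | succ k ih => rw [pow_succ, phiD_mul hdet, ih, ← pow_succ']

theorem phiD_matexp (hdet : IsUnit Δ.det) (X : Matrix (Fin n) (Fin n) K) :
    phiD Δ (matexp X) = matexp (phiD Δ X) := by
  simp only [matexp, phiD_sum, phiD_smul, phiD_pow hdet]

theorem phiD_logApprox (hdet : IsUnit Δ.det) (M : Matrix (Fin n) (Fin n) K) :
    ∀ k, phiD Δ (logApprox M k) = logApprox (phiD Δ M) k
  | 0 => by simp [logApprox, phiD]
  | k + 1 => by
    rw [logApprox, logApprox, phiD_add, phiD_sub, phiD_matexp hdet, phiD_logApprox hdet M k]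

end Phi

theorem matexp_eigenspaces_general {n : ℕ} {K : Type*} [Field K] [CharZero K]
    (Δ : Matrix (Fin n) (Fin n) K) (hdet : IsUnit Δ.det) :
    (∀ X : Matrix (Fin n) (Fin n) K, StrictLT X → phiD Δ X = X →
        phiD Δ (matexp X) = matexp X) ∧
    (∀ X : Matrix (Fin n) (Fin n) K, StrictLT X → phiD Δ X = -X →
        phiD Δ (matexp X) = (matexp X)⁻¹) ∧
    (∀ M : Matrix (Fin n) (Fin n) K, UnipLT M → phiD Δ M = M →
        ∃! X : Matrix (Fin n) (Fin n) K, StrictLT X ∧ phiD Δ X = X ∧ matexp X = M) ∧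
    (∀ M : Matrix (Fin n) (Fin n) K, UnipLT M → phiD Δ M = M⁻¹ →
        ∃! X : Matrix (Fin n) (Fin n) K, StrictLT X ∧ phiD Δ X = -X ∧ matexp X = M) := by
  refine ⟨fun X _ hphi => ?_, fun X hX hphi => ?_, fun M hM hphi => ?_, fun M hM hphi => ?_⟩
  · rw [phiD_matexp hdet, hphi]
  · rw [phiD_matexp hdet, hphi, matexp_neg (strictLT_iff_mem_lowerFiltration.mp hX)]
  · exact existsUnique_strictLT_matexp_eq hM (by rw [phiD_logApprox hdet, hphi])
  · refine existsUnique_strictLT_matexp_eq hM ?_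
    rw [phiD_logApprox hdet, hphi, logApprox_inv hM.sub_one_mem_lowerFiltration]

/-- exp maps NT^{Δ+} into ST^Δ and NT^{Δ-} into OT^Δ, bijectively. -/
theorem matexp_eigenspaces {n : ℕ} {K : Type*} [Field K] [CharZero K]
    (Δ : Matrix (Fin n) (Fin n) K) (hdet : IsUnit Δ.det)
    (hsym : Δᵀ = Δ ∨ Δᵀ = -Δ) :
    (∀ X : Matrix (Fin n) (Fin n) K, StrictLT X → phiD Δ X = X →
        phiD Δ (matexp X) = matexp X) ∧
    (∀ X : Matrix (Fin n) (Fin n) K, StrictLT X → phiD Δ X = -X →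
        phiD Δ (matexp X) = (matexp X)⁻¹) ∧
    (∀ M : Matrix (Fin n) (Fin n) K, UnipLT M → phiD Δ M = M →
        ∃! X : Matrix (Fin n) (Fin n) K, StrictLT X ∧ phiD Δ X = X ∧ matexp X = M) ∧
    (∀ M : Matrix (Fin n) (Fin n) K, UnipLT M → phiD Δ M = M⁻¹ →
        ∃! X : Matrix (Fin n) (Fin n) K, StrictLT X ∧ phiD Δ X = -X ∧ matexp X = M) :=
  matexp_eigenspaces_general Δ hdet
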